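/- Let A ∈ ℝ^{m×n}, q < m/2, and let U be the orthogonal projection onto R = ⋂_{T ⊆ [m], |T| = m−2q} rowspan(A_T). Then for every x* ∈ ℝ^n, {x ∈ ℝ^n : Ux = Ux*} = x* + ker(U), and this is the inclusion-wise smallest solution set among all (A,q)-robust functions: for any (A,q)-robust G, {x : Ux = Ux*} ⊆ {x : G(x) = G(x*)}. -/

import Mathlib

/-!
If `U x = U x*`, then `x - x*` lies in `ker U = (range U)ᗮ = (⋂_T rowspan A_T)ᗮ = ∑_T (rowspan A_T)ᗮ`,
the last step by finite dimensionality. A vector `v` orthogonal to the rows indexed by `T` has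
`A v` supported on the `2q` rows outside `T`, so `A v = e₁ - e₂` with `‖eᵢ‖₀ ≤ q`, and robustness
gives `G (y + v) = G y`. Translations by such `v` generate the whole sum, hence `G x = G x*`.
-/

open Matrix Finset

noncomputable section

/-- ℓ₀ "norm": the number of nonzero coordinates. -/
def l0 {m : ℕ} (w : Fin m → ℝ) : ℕ := (Finset.univ.filter fun i => w i ≠ 0).card

/-- The row span of the submatrix `A_T` (rows of `A` indexed by `T`), viewed inside
Euclidean space. -/
def rowspanE {m n : ℕ} (A : Matrix (Fin m) (Fin n) ℝ) (T : Finset (Fin m)) :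
    Submodule ℝ (EuclideanSpace ℝ (Fin n)) :=
  Submodule.span ℝ {w : EuclideanSpace ℝ (Fin n) | ∃ i ∈ T, w = A i}

/-- The range (column space) of a square matrix, viewed inside Euclidean space. -/
def rangeE {n : ℕ} (M : Matrix (Fin n) (Fin n) ℝ) : Submodule ℝ (EuclideanSpace ℝ (Fin n)) where
  carrier := {x | ∃ v : EuclideanSpace ℝ (Fin n), M.mulVec v = x}
  zero_mem' := ⟨0, Matrix.mulVec_zero M⟩
  add_mem' := by
    rintro a b ⟨va, ha⟩ ⟨vb, hb⟩
    exact ⟨va + vb, by simp [Matrix.mulVec_add, ha, hb]⟩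
  smul_mem' := by
    rintro c a ⟨v, hv⟩
    exact ⟨c • v, by simp [Matrix.mulVec_smul, hv]⟩

theorem Submodule.orthogonal_iInf {𝕜 E : Type*} [RCLike 𝕜] [NormedAddCommGroup E]
    [InnerProductSpace 𝕜 E] [FiniteDimensional 𝕜 E] {ι : Type*} (K : ι → Submodule 𝕜 E) :
    (⨅ i, K i)ᗮ = ⨆ i, (K i)ᗮ := by
  rw [← Submodule.orthogonal_orthogonal (⨆ i, (K i)ᗮ), ← Submodule.iInf_orthogonal]
  simp only [Submodule.orthogonal_orthogonal]

theorem Submodule.apply_add_eq_of_mem_iSup {R M Z : Type*} [Semiring R] [AddCommMonoid M]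
    [Module R M] {ι : Sort*} (p : ι → Submodule R M) (G : M → Z)
    (hp : ∀ i, ∀ v ∈ p i, ∀ y, G (y + v) = G y) {v : M} (hv : v ∈ ⨆ i, p i) (y : M) :
    G (y + v) = G y := by
  refine Submodule.iSup_induction p (motive := fun v => ∀ y, G (y + v) = G y) hv
    (fun i v hv => hp i v hv) (fun y => by rw [add_zero]) (fun a b ha hb y => ?_) y
  rw [← add_assoc, hb, ha]

lemma l0_le_card_of_support_subset {m : ℕ} {w : Fin m → ℝ} {s : Finset (Fin m)}
    (h : ∀ i, w i ≠ 0 → i ∈ s) : l0 w ≤ s.card :=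
  card_le_card fun i hi => h i (mem_filter.1 hi).2

lemma exists_sub_eq_of_l0_le_add {m p r : ℕ} (w : Fin m → ℝ) (hw : l0 w ≤ p + r) :
    ∃ e₁ e₂ : Fin m → ℝ, l0 e₁ ≤ p ∧ l0 e₂ ≤ r ∧ e₁ - e₂ = w := by
  classical
  set S := univ.filter fun i => w i ≠ 0
  obtain ⟨S₁, hS₁S, hS₁⟩ := exists_subset_card_eq (min_le_left S.card p)
  let e₁ : Fin m → ℝ := fun i => if i ∈ S₁ then w i else 0
  refine ⟨e₁, e₁ - w, ?_, ?_, sub_sub_cancel _ _⟩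
  · calc l0 e₁ ≤ S₁.card := l0_le_card_of_support_subset fun i hi => by
          by_contra h; simp [e₁, h] at hi
      _ ≤ p := hS₁ ▸ min_le_right _ _
  · calc l0 (e₁ - w) ≤ (S \ S₁).card := l0_le_card_of_support_subset fun i hi => by
          by_cases h : i ∈ S₁ <;> simp_all [e₁, S]
      _ ≤ r := by
          have : S.card = l0 w := rfl
          rw [card_sdiff_of_subset hS₁S, hS₁]
          omega

def IsRobust {m n : ℕ} {Z : Type*} (A : Matrix (Fin m) (Fin n) ℝ) (q : ℕ)
    (G : (Fin n → ℝ) → Z) : Prop :=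
  ∀ (x₁ x₂ : Fin n → ℝ) (e₁ e₂ : Fin m → ℝ), l0 e₁ ≤ q → l0 e₂ ≤ q →
    A.mulVec x₁ + e₁ = A.mulVec x₂ + e₂ → G x₁ = G x₂

lemma IsRobust.apply_add_eq {m n q : ℕ} {Z : Type*} {A : Matrix (Fin m) (Fin n) ℝ}
    {G : (Fin n → ℝ) → Z} (hG : IsRobust A q G) {v : Fin n → ℝ} (hv : l0 (A *ᵥ v) ≤ 2 * q)
    (y : Fin n → ℝ) : G (y + v) = G y := by
  obtain ⟨e₁, e₂, he₁, he₂, he⟩ := exists_sub_eq_of_l0_le_add (A *ᵥ v) (two_mul q ▸ hv)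
  refine hG (y + v) y e₂ e₁ he₂ he₁ ?_
  rw [mulVec_add, ← he]
  abel

lemma mulVec_apply_eq_zero_of_mem_orthogonal_rowspanE {m n : ℕ} {A : Matrix (Fin m) (Fin n) ℝ}
    {T : Finset (Fin m)} {v : EuclideanSpace ℝ (Fin n)} (hv : v ∈ (rowspanE A T)ᗮ) {i : Fin m}
    (hi : i ∈ T) : (A *ᵥ v.ofLp) i = 0 := by
  have hAi : WithLp.toLp 2 (A i) ∈ rowspanE A T := Submodule.subset_span ⟨i, hi, rfl⟩
  simpa [PiLp.inner_apply, mulVec, dotProduct, mul_comm] using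
    (Submodule.mem_orthogonal _ v).mp hv _ hAi

lemma l0_mulVec_le_of_mem_orthogonal_rowspanE {m n : ℕ} {A : Matrix (Fin m) (Fin n) ℝ}
    {T : Finset (Fin m)} {v : EuclideanSpace ℝ (Fin n)} (hv : v ∈ (rowspanE A T)ᗮ) :
    l0 (A *ᵥ v.ofLp) ≤ m - T.card :=
  calc l0 (A *ᵥ v.ofLp) ≤ Tᶜ.card := l0_le_card_of_support_subset fun _ hi =>
        mem_compl.2 fun hiT => hi (mulVec_apply_eq_zero_of_mem_orthogonal_rowspanE hv hiT)
    _ = m - T.card := by rw [card_compl, Fintype.card_fin]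

lemma mem_orthogonal_rangeE_of_mulVec_eq_zero {n : ℕ} {U : Matrix (Fin n) (Fin n) ℝ}
    (hU : U.IsSymm) {v : EuclideanSpace ℝ (Fin n)} (hv : U *ᵥ v.ofLp = 0) :
    v ∈ (rangeE U)ᗮ := by
  rw [Submodule.mem_orthogonal]
  rintro u ⟨w, hw⟩
  have : u.ofLp ⬝ᵥ v.ofLp = 0 := by
    rw [← hw, dotProduct_comm, dotProduct_mulVec, ← mulVec_transpose, hU.eq, hv, zero_dotProduct]
  simpa [PiLp.inner_apply, dotProduct, mul_comm] using this

theorem stmt9_general {m n : ℕ} (A : Matrix (Fin m) (Fin n) ℝ) (q : ℕ)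
    (U : Matrix (Fin n) (Fin n) ℝ) (hUsymm : U.IsSymm)
    (hUrange : rangeE U = ⨅ T ∈ {T : Finset (Fin m) | T.card = m - 2 * q}, rowspanE A T)
    (xs : Fin n → ℝ) :
    ({x : Fin n → ℝ | U.mulVec x = U.mulVec xs} =
        {x : Fin n → ℝ | ∃ v : Fin n → ℝ, U.mulVec v = 0 ∧ x = xs + v}) ∧
      ∀ {Z : Type} (G : (Fin n → ℝ) → Z),
        (∀ (x₁ x₂ : Fin n → ℝ) (e₁ e₂ : Fin m → ℝ), l0 e₁ ≤ q → l0 e₂ ≤ q →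
          A.mulVec x₁ + e₁ = A.mulVec x₂ + e₂ → G x₁ = G x₂) →
        {x : Fin n → ℝ | U.mulVec x = U.mulVec xs} ⊆ {x : Fin n → ℝ | G x = G xs} := by
  refine ⟨?_, fun G hG x hx => ?_⟩
  · ext x
    simp only [Set.mem_ofPred_eq]
    constructor
    · intro h
      exact ⟨x - xs, by rw [mulVec_sub, h, sub_self], (add_sub_cancel xs x).symm⟩
    · rintro ⟨v, hv, rfl⟩
      rw [mulVec_add, hv, add_zero]
  · have hv : WithLp.toLp 2 (x - xs) ∈
        ⨆ T : {T : Finset (Fin m) // T.card = m - 2 * q}, (rowspanE A T)ᗮ := by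
      have h := mem_orthogonal_rangeE_of_mulVec_eq_zero hUsymm
        (v := WithLp.toLp 2 (x - xs)) (by simp [mulVec_sub, hx.out])
      rwa [hUrange, iInf_subtype', Submodule.orthogonal_iInf] at h
    have hperiod := Submodule.apply_add_eq_of_mem_iSup _ (G ∘ WithLp.ofLp)
      (fun T w hw y => IsRobust.apply_add_eq hG
        ((l0_mulVec_le_of_mem_orthogonal_rowspanE hw).trans (by rw [T.2]; omega)) y.ofLp)
      hv (WithLp.toLp 2 xs)
    simpa using hperiod

theorem stmt9 {m n : ℕ} (A : Matrix (Fin m) (Fin n) ℝ) (q : ℕ) (hq : 2 * q < m)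
    (U : Matrix (Fin n) (Fin n) ℝ) (hUsymm : U.IsSymm) (hUidem : U * U = U)
    (hUrange : rangeE U = ⨅ T ∈ {T : Finset (Fin m) | T.card = m - 2 * q}, rowspanE A T)
    (xs : Fin n → ℝ) :
    ({x : Fin n → ℝ | U.mulVec x = U.mulVec xs} =
        {x : Fin n → ℝ | ∃ v : Fin n → ℝ, U.mulVec v = 0 ∧ x = xs + v}) ∧
      ∀ {Z : Type} (G : (Fin n → ℝ) → Z),
        (∀ (x₁ x₂ : Fin n → ℝ) (e₁ e₂ : Fin m → ℝ), l0 e₁ ≤ q → l0 e₂ ≤ q →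
          A.mulVec x₁ + e₁ = A.mulVec x₂ + e₂ → G x₁ = G x₂) →
        {x : Fin n → ℝ | U.mulVec x = U.mulVec xs} ⊆ {x : Fin n → ℝ | G x = G xs} :=
  stmt9_general A q U hUsymm hUrange xs
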